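/- (Conservation of energy, non-divergence-form model) Let d ≥ 1 and p > 0, and let u be a uniformly compactly supported smooth solution of the defocusing non-divergence-form OU-NLS with exponent p. Then the Gaussian-weighted energy E(t) = ∫_{ℝ^d×ℝ} [ (1/2)·∑_{j=1}^d |∂_{x_j}u(t,x,α)|² + (1/2)·|∂_α u(t,x,α)|² + (1/(p+2))·e^{−pα²/2}·|u(t,x,α)|^{p+2} ]·e^{−α²/2} dx dα satisfies E(t) = E(0) for all t ∈ ℝ. -/

import Mathlib

open MeasureTheory

noncomputable section

/-- Partial derivative in the time variable. -/
def pdT {d : ℕ} (u : ℝ → (Fin d → ℝ) → ℝ → ℂ) : ℝ → (Fin d → ℝ) → ℝ → ℂ :=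
  fun t x α => deriv (fun s => u s x α) t

/-- Partial derivative in the `j`-th Euclidean variable. -/
def pdX {d : ℕ} (j : Fin d) (u : ℝ → (Fin d → ℝ) → ℝ → ℂ) : ℝ → (Fin d → ℝ) → ℝ → ℂ :=
  fun t x α => deriv (fun s => u t (Function.update x j s) α) (x j)

/-- Partial derivative in the Ornstein–Uhlenbeck variable `α`. -/
def pdA {d : ℕ} (u : ℝ → (Fin d → ℝ) → ℝ → ℂ) : ℝ → (Fin d → ℝ) → ℝ → ℂ :=
  fun t x α => deriv (fun s => u t x s) α

/-- Laplacian in the Euclidean variables: `Δ_x u = ∑_j ∂²u/∂x_j²`. -/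
def lapX {d : ℕ} (u : ℝ → (Fin d → ℝ) → ℝ → ℂ) : ℝ → (Fin d → ℝ) → ℝ → ℂ :=
  fun t x α => ∑ j : Fin d, pdX j (pdX j u) t x α

/-- A uniformly compactly supported smooth solution of the defocusing non-divergence-form
OU-NLS with exponent `p`:
`i ∂_t u + Δ_x u + ∂²u/∂α² - α ∂u/∂α = e^{-pα²/2} |u|^p u`. -/
def IsUCSSolutionNonDiv (d : ℕ) (p : ℝ) (u : ℝ → (Fin d → ℝ) → ℝ → ℂ) : Prop :=
  ContDiff ℝ (⊤ : ℕ∞) (fun q : ℝ × (Fin d → ℝ) × ℝ => u q.1 q.2.1 q.2.2) ∧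
  (∃ K : Set ((Fin d → ℝ) × ℝ), IsCompact K ∧
    ∀ (t : ℝ) (x : Fin d → ℝ) (α : ℝ), (x, α) ∉ K → u t x α = 0) ∧
  ∀ (t : ℝ) (x : Fin d → ℝ) (α : ℝ),
    Complex.I * pdT u t x α + lapX u t x α + pdA (pdA u) t x α - (α : ℂ) * pdA u t x α
      = (Real.exp (-p * α ^ 2 / 2) : ℂ) * ((‖u t x α‖ ^ p : ℝ) : ℂ) * u t x α

end


section Stmt10AuxSection

open Complex Function

noncomputable section

namespace Stmt10Aux

variable {d : ℕ}

local notation "W" => (Fin d → ℝ) × ℝ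
local notation "Q" => ℝ × ((Fin d → ℝ) × ℝ)

instance haarW : (volume : Measure ((Fin d → ℝ) × ℝ)).IsAddHaarMeasure :=
  Measure.prod.instIsAddHaarMeasure volume volume

/-- directional derivative operator -/
def dv {E F : Type*} [NormedAddCommGroup E] [NormedSpace ℝ E]
    [NormedAddCommGroup F] [NormedSpace ℝ F] (v : E) (U : E → F) : E → F :=
  fun z => fderiv ℝ U z v

theorem dv_contDiff {E F : Type*} [NormedAddCommGroup E] [NormedSpace ℝ E]
    [NormedAddCommGroup F] [NormedSpace ℝ F] {U : E → F}
    (hU : ContDiff ℝ (⊤ : ℕ∞) U) (v : E) : ContDiff ℝ (⊤ : ℕ∞) (dv v U) :=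
  (hU.fderiv_right (m := (⊤:ℕ∞)) (by exact_mod_cast le_top)).clm_apply contDiff_const

theorem dv_comp_path {E F : Type*} [NormedAddCommGroup E] [NormedSpace ℝ E]
    [NormedAddCommGroup F] [NormedSpace ℝ F] {U : E → F}
    (hU : Differentiable ℝ U) {γ : ℝ → E} {v : E} {s₀ : ℝ}
    (hγ : HasDerivAt γ v s₀) : HasDerivAt (fun s => U (γ s)) (dv v U (γ s₀)) s₀ :=
  (hU (γ s₀)).hasFDerivAt.comp_hasDerivAt s₀ hγ

/-- vanishing on an open set is inherited by `dv` -/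
theorem dv_supp0 {E F : Type*} [NormedAddCommGroup E] [NormedSpace ℝ E]
    [NormedAddCommGroup F] [NormedSpace ℝ F] {g : E → F} {S : Set E}
    (hS : IsOpen S) (h : ∀ x ∈ S, g x = 0) (v : E) :
    ∀ x ∈ S, dv v g x = 0 := by
  intro x hx
  have hev : g =ᶠ[nhds x] (fun _ => 0) := by
    filter_upwards [hS.mem_nhds hx] with w hw using h w hw
  have : fderiv ℝ g x = fderiv ℝ (fun _ : E => (0 : F)) x := hev.fderiv_eq
  simp only [dv, this, fderiv_fun_const]
  rfl

/-- vanishing outside a closed set is inherited by `dv` -/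
theorem dv_supp {F : Type*} [NormedAddCommGroup F] [NormedSpace ℝ F]
    {U : Q → F} {K : Set ((Fin d → ℝ) × ℝ)} (hK : IsClosed K)
    (h : ∀ z : Q, z.2 ∉ K → U z = 0) (v : Q) :
    ∀ z : Q, z.2 ∉ K → dv v U z = 0 := by
  intro z hz
  have hopen : IsOpen {w : Q | w.2 ∉ K} := (hK.preimage continuous_snd).isOpen_compl
  exact dv_supp0 hopen (fun x hx => h x hx) v z hz

/-- symmetry of second derivatives through `dv` -/
theorem dv_comm {E F : Type*} [NormedAddCommGroup E] [NormedSpace ℝ E]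
    [NormedAddCommGroup F] [NormedSpace ℝ F] {U : E → F}
    (hU : ContDiff ℝ (⊤ : ℕ∞) U) (v w : E) (z : E) :
    dv v (dv w U) z = dv w (dv v U) z := by
  have hf : ∀ y, HasFDerivAt U (fderiv ℝ U y) y := fun y =>
    (hU.differentiable (by simp) y).hasFDerivAt
  have hf' : DifferentiableAt ℝ (fderiv ℝ U) z :=
    ((hU.fderiv_right (m := (⊤:ℕ∞)) (by exact_mod_cast le_top)).differentiable (by simp)) z
  have hx : HasFDerivAt (fderiv ℝ U) (fderiv ℝ (fderiv ℝ U) z) z := hf'.hasFDerivAt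
  have hsymm := second_derivative_symmetric hf hx
  have key : ∀ a : E, dv a (dv w U) z = (fderiv ℝ (fderiv ℝ U) z a) w := by
    intro a
    have : dv w U = fun y => (ContinuousLinearMap.apply ℝ F w) (fderiv ℝ U y) := rfl
    have hc : HasFDerivAt (fun y => (ContinuousLinearMap.apply ℝ F w) (fderiv ℝ U y))
        ((ContinuousLinearMap.apply ℝ F w).comp (fderiv ℝ (fderiv ℝ U) z)) z :=
      ((ContinuousLinearMap.apply ℝ F w).hasFDerivAt).comp z hx
    simp only [dv, this, hc.fderiv]
    rfl
  rw [key v]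
  have key2 : dv w (dv v U) z = (fderiv ℝ (fderiv ℝ U) z w) v := by
    have : dv v U = fun y => (ContinuousLinearMap.apply ℝ F v) (fderiv ℝ U y) := rfl
    have hc : HasFDerivAt (fun y => (ContinuousLinearMap.apply ℝ F v) (fderiv ℝ U y))
        ((ContinuousLinearMap.apply ℝ F v).comp (fderiv ℝ (fderiv ℝ U) z)) z :=
      ((ContinuousLinearMap.apply ℝ F v).hasFDerivAt).comp z hx
    simp only [dv, this, hc.fderiv]
    rfl
  rw [key2, hsymm v w]

/-- real inner product of two complex numbers -/
def rip (a b : ℂ) : ℝ := a.re * b.re + a.im * b.im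

theorem rip_comm (a b : ℂ) : rip a b = rip b a := by simp [rip]; ring

theorem rip_conj_mul_re (a b : ℂ) : ((starRingEnd ℂ) a * b).re = rip a b := by
  simp [rip, Complex.mul_re]

theorem rip_normSq (a : ℂ) : rip a a = Complex.normSq a := by
  simp [rip, Complex.normSq_apply]

theorem rip_add_right (a b c : ℂ) : rip a (b + c) = rip a b + rip a c := by
  simp [rip]; ring

theorem rip_sub_right (a b c : ℂ) : rip a (b - c) = rip a b - rip a c := by
  simp [rip]; ring

theorem rip_real_mul (r : ℝ) (a b : ℂ) : rip a ((r : ℂ) * b) = r * rip a b := by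
  simp [rip, Complex.mul_re]; ring

theorem rip_I_mul_self (a : ℂ) : rip a (Complex.I * a) = 0 := by
  simp [rip, Complex.mul_re, Complex.mul_im]; ring

theorem hasDerivAt_rip {f g : ℝ → ℂ} {f' g' : ℂ} {τ : ℝ}
    (hf : HasDerivAt f f' τ) (hg : HasDerivAt g g' τ) :
    HasDerivAt (fun s => rip (f s) (g s)) (rip f' (g τ) + rip (f τ) g') τ := by
  have hfre : HasDerivAt (fun s => (f s).re) f'.re τ :=
    (Complex.reCLM.hasFDerivAt.comp_hasDerivAt τ hf)
  have hfim : HasDerivAt (fun s => (f s).im) f'.im τ :=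
    (Complex.imCLM.hasFDerivAt.comp_hasDerivAt τ hf)
  have hgre : HasDerivAt (fun s => (g s).re) g'.re τ :=
    (Complex.reCLM.hasFDerivAt.comp_hasDerivAt τ hg)
  have hgim : HasDerivAt (fun s => (g s).im) g'.im τ :=
    (Complex.imCLM.hasFDerivAt.comp_hasDerivAt τ hg)
  have := ((hfre.mul hgre).add (hfim.mul hgim))
  exact this.congr_deriv (by simp [rip]; ring)

theorem continuous_rip {X : Type*} [TopologicalSpace X] {f g : X → ℂ}
    (hf : Continuous f) (hg : Continuous g) :
    Continuous (fun x => rip (f x) (g x)) := by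
  unfold rip
  exact ((Complex.continuous_re.comp hf).mul (Complex.continuous_re.comp hg)).add
    ((Complex.continuous_im.comp hf).mul (Complex.continuous_im.comp hg))

/-- the Gaussian weight -/
theorem hasDerivAt_gauss (c x : ℝ) : HasDerivAt (fun y : ℝ => Real.exp (c * y ^ 2 / 2))
    (Real.exp (c * x ^ 2 / 2) * (c * x)) x := by
  have h1 : HasDerivAt (fun y : ℝ => c * y ^ 2 / 2) (c * x) x := by
    have := ((hasDerivAt_pow 2 x).const_mul c).div_const 2
    refine this.congr_deriv ?_
    push_cast
    ring
  exact (Real.hasDerivAt_exp (c * x ^ 2 / 2)).comp x h1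

/-- straight path in `ℝ × W` with constant time -/
theorem hasDerivAt_pathW (t₀ : ℝ) (q v : (Fin d → ℝ) × ℝ) (s₀ : ℝ) :
    HasDerivAt (fun s : ℝ => ((t₀, q + s • v) : ℝ × ((Fin d → ℝ) × ℝ))) (0, v) s₀ := by
  have h : HasDerivAt (fun s : ℝ => q + s • v) v s₀ := by
    simpa using ((hasDerivAt_id s₀).smul_const v).const_add q
  exact (hasDerivAt_const s₀ t₀).prodMk h

theorem hasDerivAt_pathT (x : (Fin d → ℝ) × ℝ) (t : ℝ) :
    HasDerivAt (fun s : ℝ => ((s, x) : ℝ × ((Fin d → ℝ) × ℝ))) (1, 0) t :=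
  (hasDerivAt_id t).prodMk (hasDerivAt_const t x)

theorem hasDerivAt_pathX (t : ℝ) (x : Fin d → ℝ) (α : ℝ) (j : Fin d) (s₀ : ℝ) :
    HasDerivAt (fun s : ℝ => ((t, Function.update x j s, α) : ℝ × ((Fin d → ℝ) × ℝ)))
      (0, Pi.single j 1, 0) s₀ :=
  (hasDerivAt_const s₀ t).prodMk ((hasDerivAt_update x j s₀).prodMk (hasDerivAt_const s₀ α))

theorem hasDerivAt_pathA (t : ℝ) (x : Fin d → ℝ) (α : ℝ) :
    HasDerivAt (fun s : ℝ => ((t, x, s) : ℝ × ((Fin d → ℝ) × ℝ))) (0, 0, 1) α :=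
  (hasDerivAt_const α t).prodMk ((hasDerivAt_const α x).prodMk (hasDerivAt_id α))

section pd

variable {V : ℝ × ((Fin d → ℝ) × ℝ) → ℂ} {w : ℝ → (Fin d → ℝ) → ℝ → ℂ}

theorem pdT_eq_dv (hV : Differentiable ℝ V) (hw : ∀ t x α, w t x α = V (t, x, α)) :
    ∀ t x α, pdT w t x α = dv ((1, 0) : ℝ × ((Fin d → ℝ) × ℝ)) V (t, x, α) := by
  intro t x α
  have h : (fun s => w s x α) = fun s => V (s, x, α) := funext fun s => hw s x α
  have := dv_comp_path hV (hasDerivAt_pathT (x, α) t)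
  rw [pdT, h]
  exact this.deriv

theorem pdX_eq_dv (hV : Differentiable ℝ V) (hw : ∀ t x α, w t x α = V (t, x, α)) (j : Fin d) :
    ∀ t x α, pdX j w t x α = dv ((0, Pi.single j 1, 0) : ℝ × ((Fin d → ℝ) × ℝ)) V (t, x, α) := by
  intro t x α
  have h : (fun s => w t (Function.update x j s) α)
      = fun s => V (t, Function.update x j s, α) := funext fun s => hw _ _ _
  have := dv_comp_path hV (hasDerivAt_pathX t x α j (x j))
  rw [pdX, h]
  simpa [Function.update_eq_self] using this.deriv

theorem pdA_eq_dv (hV : Differentiable ℝ V) (hw : ∀ t x α, w t x α = V (t, x, α)) :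
    ∀ t x α, pdA w t x α = dv ((0, 0, 1) : ℝ × ((Fin d → ℝ) × ℝ)) V (t, x, α) := by
  intro t x α
  have h : (fun s => w t x s) = fun s => V (t, x, s) := funext fun s => hw _ _ _
  have := dv_comp_path hV (hasDerivAt_pathA t x α)
  rw [pdA, h]
  exact this.deriv

end pd

/-- integral of a line derivative of a compactly supported smooth function vanishes -/
theorem integral_lineDeriv_zero (g : (Fin d → ℝ) × ℝ → ℝ)
    (hg : ContDiff ℝ (⊤ : ℕ∞) g) (h'g : HasCompactSupport g) (v : (Fin d → ℝ) × ℝ) :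
    ∫ q : (Fin d → ℝ) × ℝ, lineDeriv ℝ g q v = 0 := by
  obtain ⟨C, hC⟩ := ContDiff.lipschitzWith_of_hasCompactSupport h'g hg (by simp)
  have h := LipschitzWith.integral_lineDeriv_mul_eq (μ := volume)
    (f := fun _ => (1 : ℝ)) (g := g) (C := 0) (LipschitzWith.const' 1) hC h'g (-v)
  simp only [lineDeriv, deriv_const, zero_mul, integral_zero, neg_neg, mul_one] at h
  exact h.symm

theorem abs_rpow_eq (w : ℂ) (c : ℝ) :
    ‖w‖ ^ c = Complex.normSq w ^ (c / 2) := by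
  rw [Complex.norm_def, Real.sqrt_eq_rpow, ← Real.rpow_mul (Complex.normSq_nonneg _),
    one_div_mul_eq_div]

theorem hasDerivAt_abs_sq {f : ℝ → ℂ} {f' : ℂ} {τ : ℝ} (hf : HasDerivAt f f' τ) :
    HasDerivAt (fun s => ‖f s‖ ^ 2) (2 * rip (f τ) f') τ := by
  have h : (fun s => ‖f s‖ ^ 2) = fun s => rip (f s) (f s) := by
    funext s; rw [Complex.sq_norm, ← rip_normSq]
  rw [h]
  have := hasDerivAt_rip hf hf
  convert this using 1
  rw [rip_comm f' (f τ)]; ring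

theorem hasDerivAt_abs_rpow {p : ℝ} (hp : 0 < p) {f : ℝ → ℂ} {f' : ℂ} {τ : ℝ}
    (hf : HasDerivAt f f' τ) :
    HasDerivAt (fun s => ‖f s‖ ^ (p + 2))
      ((p + 2) * ‖f τ‖ ^ p * rip (f τ) f') τ := by
  have h : (fun s => ‖f s‖ ^ (p + 2))
      = fun s => Complex.normSq (f s) ^ ((p + 2) / 2) := by
    funext s; rw [abs_rpow_eq]
  rw [h]
  have hg : HasDerivAt (fun s => Complex.normSq (f s)) (2 * rip (f τ) f') τ := by
    have h2 : (fun s => Complex.normSq (f s)) = fun s => rip (f s) (f s) := by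
      funext s; rw [rip_normSq]
    rw [h2]
    convert hasDerivAt_rip hf hf using 1
    rw [rip_comm f' (f τ)]; ring
  have h1 : (1 : ℝ) ≤ (p + 2) / 2 := by linarith
  have := (Real.hasDerivAt_rpow_const (x := Complex.normSq (f τ)) (p := (p + 2) / 2)
    (Or.inr h1)).comp τ hg
  refine this.congr_deriv ?_
  have e1 : (p + 2) / 2 - 1 = p / 2 := by ring
  rw [abs_rpow_eq, e1]
  ring

theorem continuous_abs_rpow {X : Type*} [TopologicalSpace X] {f : X → ℂ}
    (hf : Continuous f) {c : ℝ} (hc : 0 ≤ c) :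
    Continuous (fun x => ‖f x‖ ^ c) :=
  (Real.continuous_rpow_const hc).comp (continuous_norm.comp hf)

theorem hasDerivAt_gauss' (x : ℝ) : HasDerivAt (fun y : ℝ => Real.exp (-y ^ 2 / 2))
    (Real.exp (-x ^ 2 / 2) * (-x)) x := by
  have h1 : HasDerivAt (fun y : ℝ => -y ^ 2 / 2) (-x) x := by
    have := ((hasDerivAt_pow 2 x).neg).div_const 2
    refine this.congr_deriv ?_
    push_cast
    ring
  exact (Real.hasDerivAt_exp (-x ^ 2 / 2)).comp x h1

theorem rip_sum {ι : Type*} (a : ℂ) (s : Finset ι) (f : ι → ℂ) :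
    rip a (∑ i ∈ s, f i) = ∑ i ∈ s, rip a (f i) := by
  simp [rip, Complex.re_sum, Complex.im_sum, Finset.mul_sum, Finset.sum_add_distrib]

section core

variable {d : ℕ} {p : ℝ}

/-- time direction -/
def vT : ℝ × ((Fin d → ℝ) × ℝ) := (1, 0)
/-- `j`-th space direction -/
def vX (j : Fin d) : ℝ × ((Fin d → ℝ) × ℝ) := (0, Pi.single j 1, 0)
/-- OU direction -/
def vA : ℝ × ((Fin d → ℝ) × ℝ) := (0, 0, 1)

variable (p) in
/-- energy density, on the uncurried domain -/
def densQ (U : ℝ × ((Fin d → ℝ) × ℝ) → ℂ) : ℝ × ((Fin d → ℝ) × ℝ) → ℝ := fun z =>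
  ((1 / 2) * ∑ j : Fin d, ‖dv (vX j) U z‖ ^ 2
    + (1 / 2) * ‖dv vA U z‖ ^ 2
    + (1 / (p + 2)) * Real.exp (-p * z.2.2 ^ 2 / 2) * ‖U z‖ ^ (p + 2))
    * Real.exp (-z.2.2 ^ 2 / 2)

variable (p) in
/-- time derivative of the energy density -/
def dEQ (U : ℝ × ((Fin d → ℝ) × ℝ) → ℂ) : ℝ × ((Fin d → ℝ) × ℝ) → ℝ := fun z =>
  ((∑ j : Fin d, rip (dv (vX j) U z) (dv vT (dv (vX j) U) z))
    + rip (dv vA U z) (dv vT (dv vA U) z)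
    + Real.exp (-p * z.2.2 ^ 2 / 2) * ‖U z‖ ^ p * rip (U z) (dv vT U z))
    * Real.exp (-z.2.2 ^ 2 / 2)

variable {U : ℝ × ((Fin d → ℝ) × ℝ) → ℂ}

theorem hasDerivAt_densQ (hp : 0 < p) (hU : ContDiff ℝ (⊤ : ℕ∞) U)
    (τ : ℝ) (q : (Fin d → ℝ) × ℝ) :
    HasDerivAt (fun s => densQ p U (s, q)) (dEQ p U (τ, q)) τ := by
  have hUd : Differentiable ℝ U := hU.differentiable (by simp)
  have hXd : ∀ j : Fin d, Differentiable ℝ (dv (vX j) U) := fun j =>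
    (dv_contDiff hU (vX j)).differentiable (by simp)
  have hAd : Differentiable ℝ (dv vA U) :=
    (dv_contDiff hU vA).differentiable (by simp)
  -- paths
  have hpathX : ∀ j : Fin d, HasDerivAt (fun s : ℝ => dv (vX j) U (s, q))
      (dv vT (dv (vX j) U) (τ, q)) τ := fun j => dv_comp_path (hXd j) (hasDerivAt_pathT q τ)
  have hpathA : HasDerivAt (fun s : ℝ => dv vA U (s, q)) (dv vT (dv vA U) (τ, q)) τ :=
    dv_comp_path hAd (hasDerivAt_pathT q τ)
  have hpathU : HasDerivAt (fun s : ℝ => U (s, q)) (dv vT U (τ, q)) τ :=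
    dv_comp_path hUd (hasDerivAt_pathT q τ)
  -- pieces
  have h1 : HasDerivAt (fun s : ℝ => ∑ j : Fin d, ‖dv (vX j) U (s, q)‖ ^ 2)
      (∑ j : Fin d, 2 * rip (dv (vX j) U (τ, q)) (dv vT (dv (vX j) U) (τ, q))) τ :=
    HasDerivAt.fun_sum fun j _ => hasDerivAt_abs_sq (hpathX j)
  have h2 : HasDerivAt (fun s : ℝ => ‖dv vA U (s, q)‖ ^ 2)
      (2 * rip (dv vA U (τ, q)) (dv vT (dv vA U) (τ, q))) τ := hasDerivAt_abs_sq hpathA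
  have h3 : HasDerivAt (fun s : ℝ => ‖U (s, q)‖ ^ (p + 2))
      ((p + 2) * ‖U (τ, q)‖ ^ p * rip (U (τ, q)) (dv vT U (τ, q))) τ :=
    hasDerivAt_abs_rpow hp hpathU
  have h := (((h1.const_mul ((1:ℝ)/2)).add (h2.const_mul ((1:ℝ)/2))).add
    ((h3.const_mul ((1:ℝ)/(p+2))).const_mul (Real.exp (-p * q.2 ^ 2 / 2)))).mul_const
    (Real.exp (-q.2 ^ 2 / 2))
  have hp2 : p + 2 ≠ 0 := by linarith
  convert h using 1
  · rfl
  · rfl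
  · funext y
    unfold densQ
    simp only [Pi.add_apply]
    ring
  · unfold dEQ
    rw [← Finset.mul_sum]
    field_simp


theorem continuous_weight : Continuous fun z : ℝ × ((Fin d → ℝ) × ℝ) =>
    Real.exp (-z.2.2 ^ 2 / 2) :=
  Real.continuous_exp.comp ((((continuous_snd.comp continuous_snd).pow 2).neg).div_const 2)

theorem continuous_pweight (p : ℝ) : Continuous fun z : ℝ × ((Fin d → ℝ) × ℝ) =>
    Real.exp (-p * z.2.2 ^ 2 / 2) :=
  Real.continuous_exp.comp ((continuous_const.mul
    ((continuous_snd.comp continuous_snd).pow 2)).div_const 2)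

theorem continuous_densQ (hp : 0 < p) (hU : ContDiff ℝ (⊤ : ℕ∞) U) :
    Continuous (densQ p U) := by
  have hc : ∀ v, Continuous (dv v U) := fun v => (dv_contDiff hU v).continuous
  have habs : ∀ v, Continuous fun z => ‖dv v U z‖ ^ 2 := fun v =>
    (continuous_norm.comp (hc v)).pow 2
  unfold densQ
  exact (((continuous_const.mul (continuous_finset_sum _ fun j _ => habs (vX j))).add
    (continuous_const.mul (habs vA))).add
    ((continuous_const.mul (continuous_pweight p)).mul
      (continuous_abs_rpow hU.continuous (by linarith)))).mul continuous_weight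

theorem continuous_dEQ (hp : 0 < p) (hU : ContDiff ℝ (⊤ : ℕ∞) U) :
    Continuous (dEQ p U) := by
  have hc : ∀ v, Continuous (dv v U) := fun v => (dv_contDiff hU v).continuous
  have hc2 : ∀ v w, Continuous (dv v (dv w U)) := fun v w =>
    (dv_contDiff (dv_contDiff hU w) v).continuous
  unfold dEQ
  exact (((continuous_finset_sum _ fun j _ =>
      continuous_rip (hc (vX j)) (hc2 vT (vX j))).add
    (continuous_rip (hc vA) (hc2 vT vA))).add
    (((continuous_pweight p).mul (continuous_abs_rpow hU.continuous hp.le)).mul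
      (continuous_rip hU.continuous (hc vT)))).mul continuous_weight

theorem densQ_supp (hp : 0 < p) {K : Set ((Fin d → ℝ) × ℝ)} (hKc : IsClosed K)
    (hs : ∀ z : ℝ × ((Fin d → ℝ) × ℝ), z.2 ∉ K → U z = 0) :
    ∀ z : ℝ × ((Fin d → ℝ) × ℝ), z.2 ∉ K → densQ p U z = 0 := by
  intro z hz
  have h1 : ∀ j : Fin d, dv (vX j) U z = 0 := fun j => dv_supp hKc hs (vX j) z hz
  have h2 : dv vA U z = 0 := dv_supp hKc hs vA z hz
  have h3 : U z = 0 := hs z hz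
  have hp2 : p + 2 ≠ 0 := by linarith
  unfold densQ
  simp [h1, h2, h3, Real.zero_rpow hp2]

theorem dEQ_supp (hp : 0 < p) {K : Set ((Fin d → ℝ) × ℝ)} (hKc : IsClosed K)
    (hs : ∀ z : ℝ × ((Fin d → ℝ) × ℝ), z.2 ∉ K → U z = 0) :
    ∀ z : ℝ × ((Fin d → ℝ) × ℝ), z.2 ∉ K → dEQ p U z = 0 := by
  intro z hz
  have h1 : ∀ j : Fin d, dv (vX j) U z = 0 := fun j => dv_supp hKc hs (vX j) z hz
  have h2 : dv vA U z = 0 := dv_supp hKc hs vA z hz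
  have h3 : U z = 0 := hs z hz
  unfold dEQ
  simp [h1, h2, h3, rip]

variable (U) in
/-- the energy flux in direction `v` -/
def fluxQ (v : (Fin d → ℝ) × ℝ) : ℝ × ((Fin d → ℝ) × ℝ) → ℝ := fun z =>
  rip (dv vT U z) (dv ((0 : ℝ), v) U z) * Real.exp (-z.2.2 ^ 2 / 2)

theorem lineDeriv_fluxQ (hU : ContDiff ℝ (⊤ : ℕ∞) U) (t₀ : ℝ)
    (q v w : (Fin d → ℝ) × ℝ) :
    lineDeriv ℝ (fun r => fluxQ U v (t₀, r)) q w =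
      (rip (dv ((0 : ℝ), w) (dv vT U) (t₀, q)) (dv ((0 : ℝ), v) U (t₀, q))
        + rip (dv vT U (t₀, q)) (dv ((0 : ℝ), w) (dv ((0 : ℝ), v) U) (t₀, q)))
        * Real.exp (-q.2 ^ 2 / 2)
      + rip (dv vT U (t₀, q)) (dv ((0 : ℝ), v) U (t₀, q))
        * (Real.exp (-q.2 ^ 2 / 2) * (-q.2) * w.2) := by
  have hTd : Differentiable ℝ (dv vT U) :=
    (dv_contDiff hU vT).differentiable (by simp)
  have hvd : Differentiable ℝ (dv ((0 : ℝ), v) U) :=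
    (dv_contDiff hU ((0 : ℝ), v)).differentiable (by simp)
  have h1 : HasDerivAt (fun s : ℝ => dv vT U (t₀, q + s • w))
      (dv ((0 : ℝ), w) (dv vT U) (t₀, q)) 0 := by
    simpa using dv_comp_path hTd (hasDerivAt_pathW t₀ q w 0)
  have h2 : HasDerivAt (fun s : ℝ => dv ((0 : ℝ), v) U (t₀, q + s • w))
      (dv ((0 : ℝ), w) (dv ((0 : ℝ), v) U) (t₀, q)) 0 := by
    simpa using dv_comp_path hvd (hasDerivAt_pathW t₀ q w 0)
  have hin : HasDerivAt (fun s : ℝ => (q + s • w).2) w.2 0 := by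
    have : HasDerivAt (fun s : ℝ => q.2 + s * w.2) w.2 0 := by
      simpa using ((hasDerivAt_id (0 : ℝ)).mul_const w.2).const_add q.2
    exact this
  have h3 : HasDerivAt (fun s : ℝ => Real.exp (-(q + s • w).2 ^ 2 / 2))
      (Real.exp (-q.2 ^ 2 / 2) * (-q.2) * w.2) 0 := by
    have hcomp := (hasDerivAt_gauss' ((q + (0 : ℝ) • w).2)).comp (0 : ℝ) hin
    exact hcomp.congr_deriv (by simp)
  have h := (hasDerivAt_rip h1 h2).mul h3
  simp only [zero_smul, add_zero] at h
  have hld : lineDeriv ℝ (fun r => fluxQ U v (t₀, r)) q w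
      = deriv (fun y : ℝ => rip (dv vT U (t₀, q + y • w)) (dv ((0 : ℝ), v) U (t₀, q + y • w))
          * Real.exp (-(q + y • w).2 ^ 2 / 2)) 0 := rfl
  rw [hld]
  exact h.deriv


theorem contDiff_rip {X : Type*} [NormedAddCommGroup X] [NormedSpace ℝ X] {f g : X → ℂ}
    (hf : ContDiff ℝ (⊤ : ℕ∞) f) (hg : ContDiff ℝ (⊤ : ℕ∞) g) :
    ContDiff ℝ (⊤ : ℕ∞) (fun x => rip (f x) (g x)) := by
  unfold rip
  exact ((Complex.reCLM.contDiff.comp hf).mul (Complex.reCLM.contDiff.comp hg)).add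
    ((Complex.imCLM.contDiff.comp hf).mul (Complex.imCLM.contDiff.comp hg))

theorem fluxQ_slice_contDiff (hU : ContDiff ℝ (⊤ : ℕ∞) U) (v : (Fin d → ℝ) × ℝ) (t₀ : ℝ) :
    ContDiff ℝ (⊤ : ℕ∞) (fun r : (Fin d → ℝ) × ℝ => fluxQ U v (t₀, r)) := by
  have hins : ContDiff ℝ (⊤ : ℕ∞) (fun r : (Fin d → ℝ) × ℝ =>
      ((t₀, r) : ℝ × ((Fin d → ℝ) × ℝ))) := contDiff_const.prodMk contDiff_id
  unfold fluxQ
  exact (contDiff_rip ((dv_contDiff hU vT).comp hins)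
      ((dv_contDiff hU ((0 : ℝ), v)).comp hins)).mul
    (Real.contDiff_exp.comp (((contDiff_snd.pow 2).neg).div_const 2))

theorem fluxQ_slice_supp {K : Set ((Fin d → ℝ) × ℝ)} (hKc : IsClosed K)
    (hs : ∀ z : ℝ × ((Fin d → ℝ) × ℝ), z.2 ∉ K → U z = 0) (v : (Fin d → ℝ) × ℝ) (t₀ : ℝ) :
    ∀ r ∉ K, fluxQ U v (t₀, r) = 0 := by
  intro r hr
  have h1 : dv vT U (t₀, r) = 0 := dv_supp hKc hs vT (t₀, r) hr
  unfold fluxQ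
  simp [h1, rip]

/-- key algebraic consequence of the PDE -/
theorem rip_pde (hp : 0 < p)
    (hPDE : ∀ z : ℝ × ((Fin d → ℝ) × ℝ),
      (∑ j : Fin d, dv (vX j) (dv (vX j) U) z) + dv vA (dv vA U) z
          - (z.2.2 : ℂ) * dv vA U z
        = (Real.exp (-p * z.2.2 ^ 2 / 2) : ℂ) * ((‖U z‖ ^ p : ℝ) : ℂ) * U z
          - Complex.I * dv vT U z)
    (z : ℝ × ((Fin d → ℝ) × ℝ)) :
    (∑ j : Fin d, rip (dv vT U z) (dv (vX j) (dv (vX j) U) z))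
      + rip (dv vT U z) (dv vA (dv vA U) z) - z.2.2 * rip (dv vT U z) (dv vA U z)
      = Real.exp (-p * z.2.2 ^ 2 / 2) * ‖U z‖ ^ p * rip (dv vT U z) (U z) := by
  have h1 : (∑ j : Fin d, rip (dv vT U z) (dv (vX j) (dv (vX j) U) z))
      + rip (dv vT U z) (dv vA (dv vA U) z) - z.2.2 * rip (dv vT U z) (dv vA U z)
      = rip (dv vT U z) ((∑ j : Fin d, dv (vX j) (dv (vX j) U) z) + dv vA (dv vA U) z
          - (z.2.2 : ℂ) * dv vA U z) := by
    rw [rip_sub_right, rip_add_right, rip_sum, rip_real_mul]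
  rw [h1, hPDE z, rip_sub_right, rip_I_mul_self, sub_zero, mul_assoc, rip_real_mul,
    rip_real_mul]
  ring

/-- the divergence identity -/
theorem dEQ_eq_div (hp : 0 < p) (hU : ContDiff ℝ (⊤ : ℕ∞) U)
    (hPDE : ∀ z : ℝ × ((Fin d → ℝ) × ℝ),
      (∑ j : Fin d, dv (vX j) (dv (vX j) U) z) + dv vA (dv vA U) z
          - (z.2.2 : ℂ) * dv vA U z
        = (Real.exp (-p * z.2.2 ^ 2 / 2) : ℂ) * ((‖U z‖ ^ p : ℝ) : ℂ) * U z
          - Complex.I * dv vT U z)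
    (t₀ : ℝ) (q : (Fin d → ℝ) × ℝ) :
    dEQ p U (t₀, q)
      = (∑ j : Fin d,
          lineDeriv ℝ (fun r => fluxQ U (Pi.single j 1, 0) (t₀, r)) q (Pi.single j 1, 0))
        + lineDeriv ℝ (fun r => fluxQ U ((0 : Fin d → ℝ), 1) (t₀, r)) q
            ((0 : Fin d → ℝ), 1) := by
  have hkey := rip_pde hp hPDE (t₀, q)
  have hc1 : ∀ j : Fin d, dv (vX j) (dv vT U) (t₀, q)
      = dv vT (dv (vX j) U) (t₀, q) := fun j => dv_comm hU _ _ _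
  have hc2 : dv vA (dv vT U) (t₀, q)
      = dv vT (dv vA U) (t₀, q) := dv_comm hU _ _ _
  have hvx : ∀ j : Fin d, ((0 : ℝ), ((Pi.single j 1 : Fin d → ℝ), (0 : ℝ))) = vX j :=
    fun j => rfl
  have hva : ((0 : ℝ), ((0 : Fin d → ℝ), (1 : ℝ))) = vA := rfl
  simp only [lineDeriv_fluxQ hU, hvx, hva, mul_zero, add_zero, mul_one]
  have e1 : ∀ j : Fin d, rip (dv vT (dv (vX j) U) (t₀, q)) (dv (vX j) U (t₀, q))
      = rip (dv (vX j) U (t₀, q)) (dv vT (dv (vX j) U) (t₀, q)) := fun j => rip_comm _ _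
  have e2 : rip (dv vT (dv vA U) (t₀, q)) (dv vA U (t₀, q))
      = rip (dv vA U (t₀, q)) (dv vT (dv vA U) (t₀, q)) := rip_comm _ _
  have e3 : rip (dv vT U (t₀, q)) (U (t₀, q)) = rip (U (t₀, q)) (dv vT U (t₀, q)) :=
    rip_comm _ _
  rw [e3] at hkey
  simp only [hc1, hc2, e1, e2]
  unfold dEQ
  dsimp only at hkey ⊢
  rw [← Finset.sum_mul, Finset.sum_add_distrib]
  linear_combination (-Real.exp (-q.2 ^ 2 / 2)) * hkey

/-- the divergence integrates to zero -/
theorem integral_dEQ_zero (hp : 0 < p) (hU : ContDiff ℝ (⊤ : ℕ∞) U)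
    {K : Set ((Fin d → ℝ) × ℝ)} (hKcpt : IsCompact K)
    (hs : ∀ z : ℝ × ((Fin d → ℝ) × ℝ), z.2 ∉ K → U z = 0)
    (hPDE : ∀ z : ℝ × ((Fin d → ℝ) × ℝ),
      (∑ j : Fin d, dv (vX j) (dv (vX j) U) z) + dv vA (dv vA U) z
          - (z.2.2 : ℂ) * dv vA U z
        = (Real.exp (-p * z.2.2 ^ 2 / 2) : ℂ) * ((‖U z‖ ^ p : ℝ) : ℂ) * U z
          - Complex.I * dv vT U z)
    (t₀ : ℝ) :
    ∫ q : (Fin d → ℝ) × ℝ, dEQ p U (t₀, q) = 0 := by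
  have hsm : ∀ v : (Fin d → ℝ) × ℝ,
      ContDiff ℝ (⊤ : ℕ∞) (fun r : (Fin d → ℝ) × ℝ => fluxQ U v (t₀, r)) :=
    fun v => fluxQ_slice_contDiff hU v t₀
  have hsp : ∀ v : (Fin d → ℝ) × ℝ,
      HasCompactSupport (fun r : (Fin d → ℝ) × ℝ => fluxQ U v (t₀, r)) := fun v =>
    HasCompactSupport.intro hKcpt (fluxQ_slice_supp hKcpt.isClosed hs v t₀)
  have hint : ∀ v w : (Fin d → ℝ) × ℝ,
      Integrable (fun q : (Fin d → ℝ) × ℝ =>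
        lineDeriv ℝ (fun r => fluxQ U v (t₀, r)) q w) := by
    intro v w
    have hchg : (fun q : (Fin d → ℝ) × ℝ =>
        lineDeriv ℝ (fun r => fluxQ U v (t₀, r)) q w)
        = dv w (fun r => fluxQ U v (t₀, r)) := by
      funext q
      exact (((hsm v).differentiable (by simp)) q).lineDeriv_eq_fderiv
    rw [hchg]
    apply Continuous.integrable_of_hasCompactSupport
      (dv_contDiff (hsm v) w).continuous
    apply HasCompactSupport.intro hKcpt
    intro r hr
    exact dv_supp0 (hKcpt.isClosed.isOpen_compl) (fun x hx =>
      fluxQ_slice_supp hKcpt.isClosed hs v t₀ x hx) w r hr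
  have hre : (fun q : (Fin d → ℝ) × ℝ => dEQ p U (t₀, q))
      = fun q => (∑ j : Fin d,
          lineDeriv ℝ (fun r => fluxQ U (Pi.single j 1, 0) (t₀, r)) q (Pi.single j 1, 0))
        + lineDeriv ℝ (fun r => fluxQ U ((0 : Fin d → ℝ), 1) (t₀, r)) q
            ((0 : Fin d → ℝ), 1) :=
    funext fun q => dEQ_eq_div hp hU hPDE t₀ q
  rw [hre, integral_add (integrable_finset_sum _ fun j _ => hint _ _) (hint _ _),
    integral_finset_sum _ fun j _ => hint _ _]
  have hz : ∀ v w : (Fin d → ℝ) × ℝ,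
      ∫ q : (Fin d → ℝ) × ℝ, lineDeriv ℝ (fun r => fluxQ U v (t₀, r)) q w = 0 := fun v w =>
    integral_lineDeriv_zero _ (hsm v) (hsp v) w
  simp [hz]


/-- conservation of energy at the `densQ` level -/
theorem densQ_conservation (hp : 0 < p) (hU : ContDiff ℝ (⊤ : ℕ∞) U)
    {K : Set ((Fin d → ℝ) × ℝ)} (hKcpt : IsCompact K)
    (hs : ∀ z : ℝ × ((Fin d → ℝ) × ℝ), z.2 ∉ K → U z = 0)
    (hPDE : ∀ z : ℝ × ((Fin d → ℝ) × ℝ),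
      (∑ j : Fin d, dv (vX j) (dv (vX j) U) z) + dv vA (dv vA U) z
          - (z.2.2 : ℂ) * dv vA U z
        = (Real.exp (-p * z.2.2 ^ 2 / 2) : ℂ) * ((‖U z‖ ^ p : ℝ) : ℂ) * U z
          - Complex.I * dv vT U z)
    (t : ℝ) :
    ∫ q : (Fin d → ℝ) × ℝ, densQ p U (t, q) = ∫ q : (Fin d → ℝ) × ℝ, densQ p U (0, q) := by
  have hcont : Continuous (densQ p U) := continuous_densQ hp hU
  have hcont' : Continuous (dEQ p U) := continuous_dEQ hp hU
  have hslice : ∀ τ : ℝ, Continuous fun q : (Fin d → ℝ) × ℝ => densQ p U (τ, q) :=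
    fun τ => hcont.comp (continuous_const.prodMk continuous_id)
  have hslice' : ∀ τ : ℝ, Continuous fun q : (Fin d → ℝ) × ℝ => dEQ p U (τ, q) :=
    fun τ => hcont'.comp (continuous_const.prodMk continuous_id)
  have hderiv : ∀ t₀ : ℝ, HasDerivAt (fun τ => ∫ q : (Fin d → ℝ) × ℝ, densQ p U (τ, q)) 0 t₀ := by
    intro t₀
    obtain ⟨C, hC⟩ := (isCompact_Icc (a := t₀ - 1) (b := t₀ + 1)).prod hKcpt
      |>.exists_bound_of_continuousOn hcont'.continuousOn
    have key := hasDerivAt_integral_of_dominated_loc_of_deriv_le (μ := volume)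
      (F := fun τ (q : (Fin d → ℝ) × ℝ) => densQ p U (τ, q))
      (F' := fun τ (q : (Fin d → ℝ) × ℝ) => dEQ p U (τ, q))
      (x₀ := t₀) (s := Metric.ball t₀ 1) (bound := K.indicator fun _ => C) (Metric.ball_mem_nhds t₀ one_pos)
      (Filter.Eventually.of_forall fun τ => (hslice τ).aestronglyMeasurable)
      ?_ ((hslice' t₀).aestronglyMeasurable) ?_ ?_
      (Filter.Eventually.of_forall fun q τ _ => hasDerivAt_densQ hp hU τ q)
    · have h0 := key.2
      rwa [integral_dEQ_zero hp hU hKcpt hs hPDE t₀] at h0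
    · apply (hslice t₀).integrable_of_hasCompactSupport
      apply HasCompactSupport.intro hKcpt
      intro q hq
      exact densQ_supp hp hKcpt.isClosed hs (t₀, q) hq
    · apply Filter.Eventually.of_forall
      intro q τ hτ
      by_cases hq : q ∈ K
      · rw [Set.indicator_of_mem hq]
        apply hC (τ, q)
        refine Set.mem_prod.2 ⟨?_, hq⟩
        rw [Metric.mem_ball, Real.dist_eq] at hτ
        have := abs_lt.1 hτ
        exact Set.mem_Icc.2 ⟨by linarith [this.1], by linarith [this.2]⟩
      · rw [Set.indicator_of_notMem hq]
        show ‖dEQ p U (τ, q)‖ ≤ 0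
        rw [dEQ_supp hp hKcpt.isClosed hs (τ, q) hq]
        simp
    · rw [integrable_indicator_iff hKcpt.measurableSet]
      exact integrableOn_const hKcpt.measure_lt_top.ne
  exact is_const_of_deriv_eq_zero
    (fun τ => (hderiv τ).differentiableAt) (fun τ => (hderiv τ).deriv) t 0

end core

end Stmt10Aux

end

end Stmt10AuxSection

open Stmt10Aux in
/-- Conservation of the Gaussian-weighted energy for the non-divergence-form model. -/
theorem stmt10 (d : ℕ) (hd : 1 ≤ d) (p : ℝ) (hp : 0 < p)
    (u : ℝ → (Fin d → ℝ) → ℝ → ℂ) (hu : IsUCSSolutionNonDiv d p u) (t : ℝ) :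
    ∫ q : (Fin d → ℝ) × ℝ,
        ((1 / 2) * ∑ j : Fin d, ‖pdX j u t q.1 q.2‖ ^ 2
          + (1 / 2) * ‖pdA u t q.1 q.2‖ ^ 2
          + (1 / (p + 2)) * Real.exp (-p * q.2 ^ 2 / 2) * ‖u t q.1 q.2‖ ^ (p + 2))
          * Real.exp (-q.2 ^ 2 / 2)
      = ∫ q : (Fin d → ℝ) × ℝ,
        ((1 / 2) * ∑ j : Fin d, ‖pdX j u 0 q.1 q.2‖ ^ 2
          + (1 / 2) * ‖pdA u 0 q.1 q.2‖ ^ 2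
          + (1 / (p + 2)) * Real.exp (-p * q.2 ^ 2 / 2) * ‖u 0 q.1 q.2‖ ^ (p + 2))
          * Real.exp (-q.2 ^ 2 / 2) := by
  obtain ⟨hsm, ⟨K, hKcpt, hK0⟩, hpde⟩ := hu
  set U : ℝ × ((Fin d → ℝ) × ℝ) → ℂ := fun z => u z.1 z.2.1 z.2.2 with hUdef
  have hUsm : ContDiff ℝ (⊤ : ℕ∞) U := hsm
  have hUd : Differentiable ℝ U := hUsm.differentiable (by simp)
  have hs : ∀ z : ℝ × ((Fin d → ℝ) × ℝ), z.2 ∉ K → U z = 0 := by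
    intro z hz
    exact hK0 z.1 z.2.1 z.2.2 (by simpa using hz)
  -- conversion of partial derivatives
  have hT : ∀ (τ : ℝ) (x : Fin d → ℝ) (α : ℝ), pdT u τ x α = dv vT U (τ, x, α) :=
    pdT_eq_dv hUd fun _ _ _ => rfl
  have hX : ∀ (j : Fin d) (τ : ℝ) (x : Fin d → ℝ) (α : ℝ),
      pdX j u τ x α = dv (vX j) U (τ, x, α) := fun j =>
    pdX_eq_dv hUd (fun _ _ _ => rfl) j
  have hA : ∀ (τ : ℝ) (x : Fin d → ℝ) (α : ℝ), pdA u τ x α = dv vA U (τ, x, α) :=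
    pdA_eq_dv hUd fun _ _ _ => rfl
  have hXX : ∀ (j : Fin d) (τ : ℝ) (x : Fin d → ℝ) (α : ℝ),
      pdX j (pdX j u) τ x α = dv (vX j) (dv (vX j) U) (τ, x, α) := fun j =>
    pdX_eq_dv ((dv_contDiff hUsm (vX j)).differentiable (by simp))
      (hX j) j
  have hAA : ∀ (τ : ℝ) (x : Fin d → ℝ) (α : ℝ),
      pdA (pdA u) τ x α = dv vA (dv vA U) (τ, x, α) :=
    pdA_eq_dv ((dv_contDiff hUsm vA).differentiable (by simp)) hA
  -- the PDE in uncurried form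
  have hPDE : ∀ z : ℝ × ((Fin d → ℝ) × ℝ),
      (∑ j : Fin d, dv (vX j) (dv (vX j) U) z) + dv vA (dv vA U) z
          - (z.2.2 : ℂ) * dv vA U z
        = (Real.exp (-p * z.2.2 ^ 2 / 2) : ℂ) * ((‖U z‖ ^ p : ℝ) : ℂ) * U z
          - Complex.I * dv vT U z := by
    intro z
    have h := hpde z.1 z.2.1 z.2.2
    simp only [lapX, hT, hXX, hAA, hA, Prod.mk.eta] at h
    linear_combination h
  -- identify the integrand with `densQ`
  have hint_eq : ∀ τ : ℝ,
      (fun q : (Fin d → ℝ) × ℝ =>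
        ((1 / 2) * ∑ j : Fin d, ‖pdX j u τ q.1 q.2‖ ^ 2
          + (1 / 2) * ‖pdA u τ q.1 q.2‖ ^ 2
          + (1 / (p + 2)) * Real.exp (-p * q.2 ^ 2 / 2) * ‖u τ q.1 q.2‖ ^ (p + 2))
          * Real.exp (-q.2 ^ 2 / 2))
      = fun q : (Fin d → ℝ) × ℝ => densQ p U (τ, q) := by
    intro τ
    funext q
    simp only [hX, hA, Prod.mk.eta, densQ, hUdef]
  rw [hint_eq t, hint_eq 0]
  exact densQ_conservation hp hUsm hKcpt hs hPDE t
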